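/- Let P be a polynomial of degree p and suppose z_1 is a zero of P with length n_1 (meaning P(z_1) = \Delta^k P(z_1) = 0 for 0 \leq k < n_1 and \Delta^{n_1} P(z_1) \neq 0) and P(z_1 - 1) \neq 0. Then there is a polynomial P_1 of degree p - n_1 with P(z) = (z - z_1)^{\underline{n_1}} P_1(z) and P_1(z_1 + n_1) \neq 0. -/

import Mathlib

open Polynomial

/-
Writing `Δ` for the forward difference, Newton's expansion
`P(z + m) = ∑_{k ≤ m} (m choose k) Δᵏ P(z)` shows that if `Δᵏ P(z₁) = 0` for all `k < n₁`, then
`P(z₁ + m) = 0` for `m < n₁` and `P(z₁ + n₁) = Δ^{n₁} P(z₁) ≠ 0`. The `n₁` distinct roots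
`z₁, …, z₁ + n₁ - 1` give the falling-factorial factor, and the quotient cannot vanish at
`z₁ + n₁` because `P` does not.
-/

/-- The forward difference of a polynomial: `ΔP(z) = P(z+1) - P(z)`. -/
noncomputable def pdelta (P : Polynomial ℂ) : Polynomial ℂ := P.comp (X + C 1) - P

section RootsProduct

variable {R ι : Type*} [CommRing R]

theorem prod_range_X_sub_C_sub_natCast (z : R) (n : ℕ) :
    ∏ k ∈ Finset.range n, (X - C z - C (k : R)) = ∏ k ∈ Finset.range n, (X - C (z + k)) := by
  simp only [C_add, sub_sub]

variable [IsDomain R]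

theorem prod_X_sub_C_dvd_of_isRoot {P : R[X]} {s : Finset ι} {f : ι → R} (hf : Set.InjOn f s)
    (hroot : ∀ i ∈ s, P.IsRoot (f i)) : ∏ i ∈ s, (X - C (f i)) ∣ P := by
  rcases eq_or_ne P 0 with rfl | hP
  · exact dvd_zero _
  have hnodup : (s.val.map f).Nodup := Multiset.Nodup.map_on hf s.nodup
  have hsub : s.val.map f ≤ P.roots := by
    refine (Multiset.le_iff_subset hnodup).2 fun a ha => ?_
    obtain ⟨i, hi, rfl⟩ := Multiset.mem_map.1 ha
    exact (mem_roots hP).2 (hroot i hi)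
  have hprod : ∏ i ∈ s, (X - C (f i)) = ((s.val.map f).map fun a => X - C a).prod := by
    rw [Multiset.map_map]; rfl
  exact hprod ▸ (Multiset.prod_X_sub_C_dvd_iff_le_roots hP _).2 hsub

variable [CharZero R]

theorem eval_prod_range_X_sub_C_add_ne_zero (z : R) (n : ℕ) :
    (∏ k ∈ Finset.range n, (X - C (z + k))).eval (z + n) ≠ 0 := by
  rw [eval_prod, Finset.prod_ne_zero_iff]
  intro k hk
  simp only [eval_sub, eval_X, eval_C, add_sub_add_left_eq_sub, sub_ne_zero]
  exact_mod_cast (Finset.mem_range.1 hk).ne'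

end RootsProduct

theorem eval_pdelta (P : ℂ[X]) : (pdelta P).eval = fwdDiff 1 P.eval := by
  funext z
  simp [pdelta, fwdDiff, eval_comp]

theorem eval_pdelta_iterate (P : ℂ[X]) (k : ℕ) : (pdelta^[k] P).eval = (fwdDiff 1)^[k] P.eval := by
  induction k generalizing P with
  | zero => rfl
  | succ k ih => rw [Function.iterate_succ_apply, Function.iterate_succ_apply, ih, eval_pdelta]

theorem eval_add_natCast_eq_pdelta_iterate {P : ℂ[X]} {z : ℂ} {m : ℕ}
    (hlow : ∀ k < m, (pdelta^[k] P).eval z = 0) : P.eval (z + m) = (pdelta^[m] P).eval z := by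
  have newton := shift_eq_sum_fwdDiff_iter (1 : ℂ) P.eval m z
  simp only [← eval_pdelta_iterate, nsmul_one] at newton
  rw [newton, Finset.sum_range_succ, Finset.sum_eq_zero fun k hk => ?_, zero_add,
    Nat.choose_self, one_smul]
  rw [hlow k (Finset.mem_range.1 hk), smul_zero]

theorem stmt_9_general (P : Polynomial ℂ) (z1 : ℂ) (n1 : ℕ)
    (h0 : ∀ k < n1, ((pdelta^[k]) P).eval z1 = 0)
    (h1 : ((pdelta^[n1]) P).eval z1 ≠ 0) :
    ∃ P1 : Polynomial ℂ, P1.natDegree = P.natDegree - n1 ∧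
      P = (∏ k ∈ Finset.range n1, (X - C z1 - C (k : ℂ))) * P1 ∧
      P1.eval (z1 + n1) ≠ 0 := by
  have hroot : ∀ m ∈ Finset.range n1, P.IsRoot (z1 + m) := fun m hm => by
    have hm := Finset.mem_range.1 hm
    rw [IsRoot, eval_add_natCast_eq_pdelta_iterate fun k hk => h0 k (hk.trans hm), h0 m hm]
  have hne : P.eval (z1 + n1) ≠ 0 := by rwa [eval_add_natCast_eq_pdelta_iterate h0]
  have hinj : Set.InjOn (fun k : ℕ => z1 + k) (Finset.range n1) := fun a _ b _ hab => by
    simpa using hab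
  obtain ⟨P1, hP1⟩ := prod_X_sub_C_dvd_of_isRoot hinj hroot
  have hP1ne : P1.eval (z1 + n1) ≠ 0 := fun h => hne (by rw [hP1, eval_mul, h, mul_zero])
  have hQ0 : ∏ k ∈ Finset.range n1, (X - C (z1 + k)) ≠ 0 := fun h =>
    eval_prod_range_X_sub_C_add_ne_zero z1 n1 (by rw [h, eval_zero])
  have hP10 : P1 ≠ 0 := fun h => hP1ne (by rw [h, eval_zero])
  refine ⟨P1, ?_, by rw [prod_range_X_sub_C_sub_natCast, hP1], hP1ne⟩
  rw [hP1, natDegree_mul hQ0 hP10, natDegree_finsetProd_X_sub_C_eq_card, Finset.card_range,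
    Nat.add_sub_cancel_left]

/-- if `z₁` is a zero of `P` with length `n₁` (i.e. `Δᵏ P(z₁) = 0` for
`0 ≤ k < n₁` and `Δ^{n₁} P(z₁) ≠ 0`) and `P(z₁ - 1) ≠ 0`, then
`P = (z - z₁)^{\underline{n₁}} P₁` with `deg P₁ = deg P - n₁` and `P₁(z₁ + n₁) ≠ 0`. -/
theorem stmt_9 (P : Polynomial ℂ) (z1 : ℂ) (n1 : ℕ) (hn : 1 ≤ n1)
    (h0 : ∀ k < n1, ((pdelta^[k]) P).eval z1 = 0)
    (h1 : ((pdelta^[n1]) P).eval z1 ≠ 0)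
    (h2 : P.eval (z1 - 1) ≠ 0) :
    ∃ P1 : Polynomial ℂ, P1.natDegree = P.natDegree - n1 ∧
      P = (∏ k ∈ Finset.range n1, (X - C z1 - C (k : ℂ))) * P1 ∧
      P1.eval (z1 + n1) ≠ 0 :=
  stmt_9_general P z1 n1 h0 h1
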